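/- Let E ⊂ N with |E| = p ≥ 2 and E^k ⊆ D. Then ŝ_D is regressively regular over E if and only if h^ρ_D is regressively regular over E. -/
import Mathlib


open Finset
open scoped Classical

/-- The maximum coordinate of a tuple in `ℕ^k`. -/
def maxv {k : ℕ} (x : Fin k → ℕ) : ℕ := Finset.univ.sup x

/-- The minimum coordinate of a tuple in `ℕ^k`. -/
noncomputable def minv {k : ℕ} (x : Fin k → ℕ) : ℕ := sInf (Set.range x)

/-- Order equivalence of tuples: `x ot y` iff the strict-order and equality
patterns of coordinates agree. -/
def OT {k : ℕ} (x y : Fin k → ℕ) : Prop :=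
  ∀ i j : Fin k, (x i < x j ↔ y i < y j) ∧ (x i = x j ↔ y i = y j)

/-- A downward directed lattice graph: every edge strictly decreases the max norm. -/
def Downward {k : ℕ} (Θ : Set ((Fin k → ℕ) × (Fin k → ℕ))) : Prop :=
  ∀ e ∈ Θ, maxv e.2 < maxv e.1

/-- A partial selection function: whenever defined, its value is one of the
reported values `n_i`. -/
def PartialSelection {k r : ℕ}
    (F : (Fin k → ℕ) → (Fin r → (Fin k → ℕ) × ℕ) → Option ℕ) : Prop :=
  ∀ x ys n, F x ys = some n → ∃ i, n = (ys i).2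

/-- `Φ` is the family of sets `Φ^D_z` of defined values of `F` at `z`, where the
reported value of a subordinate `y_i ∈ G^z_D` is `f y_i` if `Φ y_i ≠ ∅` and
`min(y_i)` otherwise. -/
def PhiSpec {k r : ℕ} (Θ : Set ((Fin k → ℕ) × (Fin k → ℕ)))
    (F : (Fin k → ℕ) → (Fin r → (Fin k → ℕ) × ℕ) → Option ℕ)
    (D : Set (Fin k → ℕ)) (f : (Fin k → ℕ) → ℕ)
    (Φ : (Fin k → ℕ) → Set ℕ) : Prop :=
  ∀ z, Φ z = {n | ∃ ys : Fin r → (Fin k → ℕ) × ℕ,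
      (∀ i, (ys i).1 ∈ D ∧ (z, (ys i).1) ∈ Θ) ∧
      (∀ i, (ys i).2 = if Φ ((ys i).1) = ∅ then minv ((ys i).1) else f ((ys i).1)) ∧
      F z ys = some n}

/-- `f` (with associated sets `Φ`) is the committee-model function on `D` with
base value `base z` when `Φ z = ∅`, and `min (Φ z)` otherwise. -/
def CommitteeModel {k r : ℕ} (Θ : Set ((Fin k → ℕ) × (Fin k → ℕ)))
    (F : (Fin k → ℕ) → (Fin r → (Fin k → ℕ) × ℕ) → Option ℕ)
    (D : Set (Fin k → ℕ)) (base : (Fin k → ℕ) → ℕ)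
    (f : (Fin k → ℕ) → ℕ) (Φ : (Fin k → ℕ) → Set ℕ) : Prop :=
  PhiSpec Θ F D f Φ ∧
  ∀ z ∈ D, (Φ z = ∅ → f z = base z) ∧ (Φ z ≠ ∅ → f z = sInf (Φ z))

/-- `f` is regressively regular over `E`: on each order type class of `E^k`,
either `f` is constant with value `< min E`, or `f x ≥ min x` throughout. -/
def RegReg {k : ℕ} (f : (Fin k → ℕ) → ℕ) (E : Finset ℕ) : Prop :=
  ∀ x : Fin k → ℕ, (∀ i, x i ∈ E) →
    ((∀ y : Fin k → ℕ, (∀ i, y i ∈ E) → OT x y → f y = f x) ∧ f x < sInf (E : Set ℕ)) ∨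
    (∀ y : Fin k → ℕ, (∀ i, y i ∈ E) → OT x y → minv y ≤ f y)

lemma minv_le_apply {k : ℕ} (hk : 2 ≤ k) (x : Fin k → ℕ) (i : Fin k) :
    minv x ≤ x i := Nat.sInf_le ⟨i, rfl⟩

lemma minv_mem_range {k : ℕ} (hk : 2 ≤ k) (x : Fin k → ℕ) :
    ∃ i, minv x = x i := by
  have hne : (Set.range x).Nonempty := ⟨x ⟨0, by omega⟩, ⟨⟨0, by omega⟩, rfl⟩⟩
  obtain ⟨i, hi⟩ := Nat.sInf_mem hne
  exact ⟨i, hi.symm⟩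

lemma minv_le_maxv {k : ℕ} (hk : 2 ≤ k) (x : Fin k → ℕ) : minv x ≤ maxv x := by
  obtain ⟨i, hi⟩ := minv_mem_range hk x
  exact hi ▸ Finset.le_sup (Finset.mem_univ i)

lemma sInf_le_minv {k : ℕ} (hk : 2 ≤ k) (E : Finset ℕ) (x : Fin k → ℕ)
    (hx : ∀ i, x i ∈ E) : sInf (E : Set ℕ) ≤ minv x := by
  obtain ⟨i, hi⟩ := minv_mem_range hk x
  exact hi ▸ Nat.sInf_le (hx i)

lemma OT.refl {k : ℕ} (x : Fin k → ℕ) : OT x x := fun _ _ => ⟨Iff.rfl, Iff.rfl⟩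

lemma regreg_transfer {k : ℕ} (hk : 2 ≤ k) (E : Finset ℕ)
    (f g : (Fin k → ℕ) → ℕ)
    (hfg : ∀ x : Fin k → ℕ, (∀ i, x i ∈ E) → f x < minv x → g x = f x)
    (hg : ∀ x : Fin k → ℕ, (∀ i, x i ∈ E) → minv x ≤ f x → minv x ≤ g x)
    (hf : RegReg f E) : RegReg g E := by
  intro x hx
  rcases hf x hx with ⟨hc, hlt⟩ | hge
  · left
    have key : ∀ y : Fin k → ℕ, (∀ i, y i ∈ E) → OT x y → g y = f x := by
      intro y hy hot
      have h1 : f y = f x := hc y hy hot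
      have h2 : f y < minv y :=
        lt_of_lt_of_le (h1 ▸ hlt) (sInf_le_minv hk E y hy)
      rw [hfg y hy h2, h1]
    refine ⟨fun y hy hot => ?_, ?_⟩
    · rw [key y hy hot, key x hx (OT.refl x)]
    · rw [key x hx (OT.refl x)]; exact hlt
  · right
    exact fun y hy hot => hg y hy (hge y hy hot)

/-- `ŝ_D` is regressively regular over `E` iff `h^ρ_D` is. -/
theorem shat_regreg_iff_h_regreg (k r p : ℕ) (hk : 2 ≤ k) (hr : 1 ≤ r)
    (hp : 2 ≤ p)
    (Θ : Set ((Fin k → ℕ) × (Fin k → ℕ))) (hΘ : Downward Θ)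
    (F : (Fin k → ℕ) → (Fin r → (Fin k → ℕ) × ℕ) → Option ℕ)
    (hF : PartialSelection F)
    (D : Set (Fin k → ℕ)) (hD : D.Finite)
    (ρ : (Fin k → ℕ) → ℕ) (hρ : ∀ z ∈ D, minv z ≤ ρ z)
    (s h : (Fin k → ℕ) → ℕ) (Φs Φh : (Fin k → ℕ) → Set ℕ)
    (hms : CommitteeModel Θ F D maxv s Φs)
    (hmh : CommitteeModel Θ F D ρ h Φh)
    (E : Finset ℕ) (hE : E.card = p)
    (hcube : ∀ x : Fin k → ℕ, (∀ i, x i ∈ E) → x ∈ D) :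
    RegReg s E ↔ RegReg h E := by
  obtain ⟨hss, hsd⟩ := hms
  obtain ⟨hhs, hhd⟩ := hmh
  -- Φs = Φh, by induction on maxv
  have key : ∀ n, ∀ z : Fin k → ℕ, maxv z ≤ n → Φs z = Φh z := by
    intro n
    induction n with
    | zero =>
      intro z hz
      rw [hss z, hhs z]
      ext m
      constructor <;>
        · rintro ⟨ys, h1, -, -⟩
          have := hΘ (z, (ys ⟨0, hr⟩).1) (h1 ⟨0, hr⟩).2
          simp only at this
          omega
    | succ n ih =>
      intro z hz
      have heq : ∀ y : Fin k → ℕ, y ∈ D → (z, y) ∈ Θ →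
          (if Φs y = ∅ then minv y else s y) = (if Φh y = ∅ then minv y else h y) := by
        intro y hyD hyΘ
        have hlt : maxv y ≤ n := by
          have := hΘ (z, y) hyΘ
          simp only at this
          omega
        have hphi := ih y hlt
        by_cases hne : Φh y = ∅
        · rw [hphi, hne]; simp
        · rw [hphi]
          simp only [hne, if_false]
          rw [(hsd y hyD).2 (by rw [hphi]; exact hne), (hhd y hyD).2 hne, hphi]
      rw [hss z, hhs z]
      ext m
      constructor <;> rintro ⟨ys, h1, h2, h3⟩
      · exact ⟨ys, h1, fun i => by
          rw [h2 i]; exact heq _ (h1 i).1 (h1 i).2, h3⟩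
      · exact ⟨ys, h1, fun i => by
          rw [h2 i]; exact (heq _ (h1 i).1 (h1 i).2).symm, h3⟩
  have phieq : ∀ z : Fin k → ℕ, Φs z = Φh z := fun z => key (maxv z) z le_rfl
  -- s and h agree when Φ ≠ ∅
  have fval : ∀ z : Fin k → ℕ, z ∈ D → Φs z ≠ ∅ → s z = h z := by
    intro z hzD hne
    rw [(hsd z hzD).2 hne, (hhd z hzD).2 (by rw [← phieq]; exact hne), phieq]
  constructor
  · refine regreg_transfer hk E s h ?_ ?_
    · intro x hx hlt
      have hxD := hcube x hx
      have hne : Φs x ≠ ∅ := by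
        intro hemp
        rw [(hsd x hxD).1 hemp] at hlt
        exact absurd (minv_le_maxv hk x) (not_le.mpr hlt)
      exact (fval x hxD hne).symm
    · intro x hx hge
      have hxD := hcube x hx
      by_cases hne : Φs x = ∅
      · rw [(hhd x hxD).1 (by rw [← phieq]; exact hne)]
        exact hρ x hxD
      · rw [← fval x hxD hne]; exact hge
  · refine regreg_transfer hk E h s ?_ ?_
    · intro x hx hlt
      have hxD := hcube x hx
      have hne : Φh x ≠ ∅ := by
        intro hemp
        rw [(hhd x hxD).1 hemp] at hlt
        exact absurd (hρ x hxD) (not_le.mpr hlt)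
      exact fval x hxD (by rw [phieq]; exact hne)
    · intro x hx hge
      have hxD := hcube x hx
      by_cases hne : Φh x = ∅
      · rw [(hsd x hxD).1 (by rw [phieq]; exact hne)]
        exact minv_le_maxv hk x
      · rw [fval x hxD (by rw [phieq]; exact hne)]; exact hge
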